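/- arXiv:2005.13245 — 2 statements merged into one kernel-verified Lean document; each statement's English description precedes it below -/
import Mathlib

section
/- In the proxy setup (without requiring p(d|c) ≠ p(d|c')): suppose p(c) = 1/2, p(d|c) = 1−p(d|c') ≥ 1/2 (i.e., p(d|c) = p(d'|c')), and 1−p(a|c') ≥ p(a|c) ≥ 1/2 (i.e., p(a'|c') ≥ p(a|c) ≥ 1/2). If E[Y|a,c] − E[Y|a,c'] ≥ E[Y|a',c'] − E[Y|a',c] ≥ 0, then RD_crude ≥ RD_true and RD_obs ≥ RD_true. -/
/-!
With `p(c) = 1/2` a contrast of the form `E[Y|a, ·] - E[Y|a', ·]` exceeds `RD_true` by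
`(E[Y|a,c] - E[Y|a,c']) (w - 1/2) + (E[Y|a',c'] - E[Y|a',c]) (w' - 1/2)`, where `w`, `w'` are the
weights it puts on `c` in the two arms. Since `p(d) = 1/2`, `RD_obs` is such a contrast with `w`
the average over `d, d'` of `p(c|a, ·)`, and `RD_crude` is the special case of an uninformative
proxy `p(d|c) = p(d|c') = 1/2`. The assumptions on `E[Y|·,·]` reduce the claim to `w ≥ 1/2` and
`w + w' ≥ 1`. Writing `δ = p(d|c)`, `p = p(a|c)`, `q = p(a|c')`, one has
`2w - 1 = δ(1-δ)(p² - q²) / ((pδ + q(1-δ))(p(1-δ) + qδ))`, which settles the first inequality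
because `p ≥ q`, and the second after clearing denominators because `p + q ≤ 1`.
-/

/-- p(c | x, v) = p(x|c) p(v|c) p(c) / (p(x|c) p(v|c) p(c) + p(x|c') p(v|c') p(c')),
with p(c') = 1 - p(c). -/
noncomputable def pcGiven (pxc pxc' pvc pvc' pc : ℝ) : ℝ :=
  pxc * pvc * pc / (pxc * pvc * pc + pxc' * pvc' * (1 - pc))

/-- E[Y | x, v] = E[Y|x,c] * p(c|x,v) + E[Y|x,c'] * (1 - p(c|x,v)). -/
noncomputable def condExp (yc yc' w : ℝ) : ℝ := yc * w + yc' * (1 - w)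

lemma rdTrue_le_condExp_sub_condExp {y y' z z' w w' : ℝ} (hY : z' - z ≤ y - y')
    (hZ : 0 ≤ z' - z) (hw : 1 / 2 ≤ w) (hww' : 1 ≤ w + w') :
    (y - z) * (1 / 2) + (y' - z') * (1 - 1 / 2) ≤ condExp y y' w - condExp z z' w' := by
  have hbias : condExp y y' w - condExp z z' w' - ((y - z) * (1 / 2) + (y' - z') * (1 - 1 / 2))
      = (y - y') * (w - 1 / 2) + (z' - z) * (w' - 1 / 2) := by
    unfold condExp; ring
  linarith [mul_le_mul_of_nonneg_right hY (sub_nonneg.2 hw), mul_nonneg hZ (sub_nonneg.2 hww')]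

lemma pcGiven_half (x x' v v' : ℝ) : pcGiven x x' v v' (1 / 2) = x * v / (x * v + x' * v') := by
  unfold pcGiven
  rw [show (1 : ℝ) - 1 / 2 = 1 / 2 by norm_num, ← add_mul]
  exact mul_div_mul_right _ _ (by norm_num)

/-- The weight on `c` in the arm `x` of `RD_obs`, for `p(c) = 1/2` and `p(d|c) = 1 - p(d|c') = δ`. -/
noncomputable def avgPosterior (x x' δ : ℝ) : ℝ :=
  (pcGiven x x' δ (1 - δ) (1 / 2) + pcGiven x x' (1 - δ) δ (1 / 2)) / 2

lemma pcGiven_one_one_half (x x' : ℝ) : pcGiven x x' 1 1 (1 / 2) = avgPosterior x x' (1 / 2) := by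
  rw [avgPosterior, show (1 : ℝ) - 1 / 2 = 1 / 2 by norm_num, add_self_div_two]
  simp only [pcGiven_half, mul_one]
  rw [← add_mul, mul_div_mul_right _ _ (by norm_num)]

lemma rdObs_eq_condExp_avgPosterior (y y' z z' x x' δ : ℝ) :
    (condExp y y' (pcGiven x x' δ (1 - δ) (1 / 2))
        - condExp z z' (pcGiven (1 - x) (1 - x') δ (1 - δ) (1 / 2)))
        * (δ * (1 / 2) + (1 - δ) * (1 - 1 / 2))
      + (condExp y y' (pcGiven x x' (1 - δ) (1 - (1 - δ)) (1 / 2))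
        - condExp z z' (pcGiven (1 - x) (1 - x') (1 - δ) (1 - (1 - δ)) (1 / 2)))
        * (1 - (δ * (1 / 2) + (1 - δ) * (1 - 1 / 2)))
    = condExp y y' (avgPosterior x x' δ) - condExp z z' (avgPosterior (1 - x) (1 - x') δ) := by
  unfold condExp avgPosterior
  rw [sub_sub_cancel]
  ring

section avgPosterior

variable {x x' δ : ℝ}

lemma avgPosterior_sub_half (hx : 0 < x) (hx' : 0 < x') (hδ0 : 0 < δ) (hδ1 : δ < 1) :
    avgPosterior x x' δ - 1 / 2 = δ * (1 - δ) * (x ^ 2 - x' ^ 2)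
      / (2 * ((x * δ + x' * (1 - δ)) * (x * (1 - δ) + x' * δ))) := by
  have h1δ : 0 < 1 - δ := by linarith
  have hD₁ : 0 < x * δ + x' * (1 - δ) := by positivity
  have hD₂ : 0 < x * (1 - δ) + x' * δ := by positivity
  unfold avgPosterior
  simp only [pcGiven_half]
  field_simp
  ring

lemma half_le_avgPosterior (hx' : 0 < x') (hx'x : x' ≤ x) (hδ0 : 0 < δ) (hδ1 : δ < 1) :
    1 / 2 ≤ avgPosterior x x' δ := by
  have h1δ : 0 < 1 - δ := by linarith
  have hx : 0 < x := hx'.trans_le hx'x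
  rw [← sub_nonneg, avgPosterior_sub_half hx hx' hδ0 hδ1]
  have : 0 ≤ x ^ 2 - x' ^ 2 := sub_nonneg.2 (pow_le_pow_left₀ hx'.le hx'x 2)
  positivity

lemma one_le_avgPosterior_add_avgPosterior_one_sub (hx' : 0 < x') (hx'x : x' ≤ x)
    (hxx' : x + x' ≤ 1) (hδ0 : 0 < δ) (hδ1 : δ < 1) :
    1 ≤ avgPosterior x x' δ + avgPosterior (1 - x) (1 - x') δ := by
  have h1δ : 0 < 1 - δ := by linarith
  have hx : 0 < x := hx'.trans_le hx'x
  have h1x : 0 < 1 - x := by linarith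
  have h1x' : 0 < 1 - x' := by linarith
  set D := (x * δ + x' * (1 - δ)) * (x * (1 - δ) + x' * δ) with hD
  set D' := ((1 - x) * δ + (1 - x') * (1 - δ)) * ((1 - x) * (1 - δ) + (1 - x') * δ) with hD'
  have hDpos : 0 < D := by positivity
  have hD'pos : 0 < D' := by positivity
  have hsum : avgPosterior x x' δ + avgPosterior (1 - x) (1 - x') δ - 1
      = δ * (1 - δ) * (x - x') * (1 - (x + x'))
        * ((x + x') * (2 - (x + x')) + ((x - x') * (1 - 2 * δ)) ^ 2) / (4 * (D * D')) := by
    have h₁ := avgPosterior_sub_half hx hx' hδ0 hδ1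
    have h₂ := avgPosterior_sub_half h1x h1x' hδ0 hδ1
    rw [← hD] at h₁
    rw [← hD'] at h₂
    rw [show avgPosterior x x' δ + avgPosterior (1 - x) (1 - x') δ - 1
      = (avgPosterior x x' δ - 1 / 2) + (avgPosterior (1 - x) (1 - x') δ - 1 / 2) by ring, h₁, h₂]
    field_simp
    rw [hD, hD']
    ring
  have : 0 ≤ x - x' := sub_nonneg.2 hx'x
  have : 0 ≤ 1 - (x + x') := sub_nonneg.2 hxx'
  have : 0 ≤ 2 - (x + x') := by linarith
  rw [← sub_nonneg, hsum]
  positivity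

end avgPosterior

theorem stmt4_general (pc pdc pdc' pac pac' Yac Yac' Ybc Ybc' : ℝ)
    (hpdc0 : 0 < pdc) (hpdc1 : pdc < 1)
    (hpac'0 : 0 < pac')
    (hc : pc = 1/2)
    (hd : pdc = 1 - pdc')
    (ha1 : pac ≤ 1 - pac') (ha2 : 1/2 ≤ pac)
    (hY1 : Yac - Yac' ≥ Ybc' - Ybc) (hY2 : Ybc' - Ybc ≥ 0) :
    (condExp Yac Yac' (pcGiven pac pac' 1 1 pc) - condExp Ybc Ybc' (pcGiven (1 - pac) (1 - pac') 1 1 pc)) ≥ ((Yac - Ybc) * pc + (Yac' - Ybc') * (1 - pc)) ∧ ((condExp Yac Yac' (pcGiven pac pac' pdc pdc' pc) - condExp Ybc Ybc' (pcGiven (1 - pac) (1 - pac') pdc pdc' pc)) * (pdc * pc + pdc' * (1 - pc)) + (condExp Yac Yac' (pcGiven pac pac' (1 - pdc) (1 - pdc') pc) - condExp Ybc Ybc' (pcGiven (1 - pac) (1 - pac') (1 - pdc) (1 - pdc') pc)) * (1 - (pdc * pc + pdc' * (1 - pc)))) ≥ ((Yac - Ybc) * pc + (Yac' - Ybc') *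 (1 - pc)) := by
  subst hc
  obtain rfl : pdc' = 1 - pdc := by linarith
  have hqp : pac' ≤ pac := by linarith
  have hsum : pac + pac' ≤ 1 := by linarith
  have key : ∀ δ, 0 < δ → δ < 1 → (Yac - Ybc) * (1 / 2) + (Yac' - Ybc') * (1 - 1 / 2)
      ≤ condExp Yac Yac' (avgPosterior pac pac' δ)
        - condExp Ybc Ybc' (avgPosterior (1 - pac) (1 - pac') δ) := fun δ hδ0 hδ1 =>
    rdTrue_le_condExp_sub_condExp hY1 hY2 (half_le_avgPosterior hpac'0 hqp hδ0 hδ1)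
      (one_le_avgPosterior_add_avgPosterior_one_sub hpac'0 hqp hsum hδ0 hδ1)
  constructor
  · rw [ge_iff_le, pcGiven_one_one_half, pcGiven_one_one_half]
    exact key _ (by norm_num) (by norm_num)
  · rw [ge_iff_le, rdObs_eq_condExp_avgPosterior]
    exact key _ hpdc0 hpdc1

/-- Proxy setup: if p(c) = 1/2, p(d|c) = p(d'|c') ≥ 1/2,
p(a'|c') ≥ p(a|c) ≥ 1/2 and E[Y|a,c] - E[Y|a,c'] ≥ E[Y|a',c'] - E[Y|a',c] ≥ 0,
then RD_crude ≥ RD_true and RD_obs ≥ RD_true. -/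
theorem stmt4 (pc pdc pdc' pac pac' Yac Yac' Ybc Ybc' : ℝ)
    (hpc0 : 0 < pc) (hpc1 : pc < 1)
    (hpdc0 : 0 < pdc) (hpdc1 : pdc < 1) (hpdc'0 : 0 < pdc') (hpdc'1 : pdc' < 1)
    (hpac0 : 0 < pac) (hpac1 : pac < 1) (hpac'0 : 0 < pac') (hpac'1 : pac' < 1)
    (hc : pc = 1/2)
    (hd : pdc = 1 - pdc') (hd2 : 1/2 ≤ pdc)
    (ha1 : pac ≤ 1 - pac') (ha2 : 1/2 ≤ pac)
    (hY1 : Yac - Yac' ≥ Ybc' - Ybc) (hY2 : Ybc' - Ybc ≥ 0) :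
    (condExp Yac Yac' (pcGiven pac pac' 1 1 pc) - condExp Ybc Ybc' (pcGiven (1 - pac) (1 - pac') 1 1 pc)) ≥ ((Yac - Ybc) * pc + (Yac' - Ybc') * (1 - pc)) ∧ ((condExp Yac Yac' (pcGiven pac pac' pdc pdc' pc) - condExp Ybc Ybc' (pcGiven (1 - pac) (1 - pac') pdc pdc' pc)) * (pdc * pc + pdc' * (1 - pc)) + (condExp Yac Yac' (pcGiven pac pac' (1 - pdc) (1 - pdc') pc) - condExp Ybc Ybc' (pcGiven (1 - pac) (1 - pac') (1 - pdc) (1 - pdc') pc)) * (1 - (pdc * pc + pdc' * (1 - pc)))) ≥ ((Yac - Ybc) * pc + (Yac' - Ybc') * (1 - pc)) :=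
  stmt4_general pc pdc pdc' pac pac' Yac Yac' Ybc Ybc' hpdc0 hpdc1 hpac'0 hc hd ha1 ha2 hY1 hY2
end

section
/- In the driver setup: if E[Y|A,D] is monotone in D, then RD_obs lies between RD_true and RD_crude, i.e. min(RD_true, RD_crude) ≤ RD_obs ≤ max(RD_true, RD_crude). -/
/-!
Write `W g g' s = g s / (g s + g' (1 - s))` for the posterior of `c` after observing an exposure
of likelihoods `g = p(x|c)`, `g' = p(x|c')` under the prior `p(c) = s`. Since `A ⊥ D | C`, the
stratum `D = v` behaves like the whole population with prior `p(c|v)`, so `RD_obs` is the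
`p(d)`-average of the crude risk differences of the two strata. Both `RD_crude - RD_obs` (a
Jensen gap of `W`, which is concave or convex in `s` according to the sign of `g - g'`) and
`RD_obs - RD_true` (`W s - s` has the sign of `g - g'`) are `p(a|c) - p(a|c')` times
`(E[Y|a,c] - E[Y|a,c']) K + (E[Y|a',c] - E[Y|a',c']) K'` with `K, K' ≥ 0`. As `W` is strictly
increasing in `s`, monotonicity of `E[Y|A,D]` in `D` forces the two outcome contrasts to have
the same sign, so the two differences have the same sign as well.
-/

open Set

noncomputable def bayesPosterior (g g' s : ℝ) : ℝ := g * s / (g * s + g' * (1 - s))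

lemma min_le_and_le_max_of_mul_nonneg {t x o : ℝ} (h : 0 ≤ (x - o) * (o - t)) :
    min t x ≤ o ∧ o ≤ max t x := by
  rcases mul_nonneg_iff.mp h with ⟨h₁, h₂⟩ | ⟨h₁, h₂⟩
  · exact ⟨min_le_of_left_le (by linarith), le_max_of_le_right (by linarith)⟩
  · exact ⟨min_le_of_right_le (by linarith), le_max_of_le_left (by linarith)⟩

lemma mul_add_mul_mul_mul_add_mul_nonneg {a b k k' l l' : ℝ} (hab : 0 ≤ a * b)
    (hk : 0 ≤ k) (hk' : 0 ≤ k') (hl : 0 ≤ l) (hl' : 0 ≤ l') :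
    0 ≤ (a * k + b * k') * (a * l + b * l') := by
  have expand : (a * k + b * k') * (a * l + b * l')
      = a ^ 2 * (k * l) + a * b * (k * l' + k' * l) + b ^ 2 * (k' * l') := by ring
  rw [expand]
  positivity

lemma condExp_sub_condExp (y y' w w' : ℝ) :
    condExp y y' w - condExp y y' w' = (y - y') * (w - w') := by
  unfold condExp; ring

section BayesPosterior

variable {g g' s t p : ℝ}

lemma pcGiven_one_one (g g' s : ℝ) : pcGiven g g' 1 1 s = bayesPosterior g g' s := by
  simp [pcGiven, bayesPosterior]

lemma pcGiven_stratum {q ρ : ℝ} (hq : q ≠ 0) (hρ : ρ ≠ 0) (hρ' : 1 - ρ ≠ 0) :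
    pcGiven g g' (s * q / ρ) ((1 - s) * q / (1 - ρ)) ρ = bayesPosterior g g' s := by
  simp only [pcGiven, bayesPosterior, mul_assoc, div_mul_cancel₀ _ hρ, div_mul_cancel₀ _ hρ']
  rw [← mul_div_mul_right (g * s) _ hq]
  ring_nf

lemma pcGiven_stratum_compl (hp : p ≠ 1) (hρ : s * p + t * (1 - p) ≠ 0)
    (hρ' : 1 - (s * p + t * (1 - p)) ≠ 0) :
    pcGiven g g' (1 - s * p / (s * p + t * (1 - p)))
      (1 - (1 - s) * p / (1 - (s * p + t * (1 - p)))) (s * p + t * (1 - p))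
      = bayesPosterior g g' t := by
  have e₁ : 1 - s * p / (s * p + t * (1 - p)) = t * (1 - p) / (s * p + t * (1 - p)) := by
    field_simp; ring
  have e₂ : 1 - (1 - s) * p / (1 - (s * p + t * (1 - p)))
      = (1 - t) * (1 - p) / (1 - (s * p + t * (1 - p))) := by
    field_simp; ring
  rw [e₁, e₂]
  exact pcGiven_stratum (sub_ne_zero.mpr hp.symm) hρ hρ'

lemma bayesPosterior_denom_pos (hg : 0 < g) (hg' : 0 < g') (hs : s ∈ Icc 0 1) :
    0 < g * s + g' * (1 - s) := by
  rcases le_total g g' with h | h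
  · nlinarith [mul_nonneg (sub_nonneg.2 h) (sub_nonneg.2 hs.2)]
  · nlinarith [mul_nonneg (sub_nonneg.2 h) hs.1]

lemma exists_bayesPosterior_sub_bayesPosterior (hg : 0 < g) (hg' : 0 < g')
    (hs : s ∈ Icc 0 1) (ht : t ∈ Icc 0 1) :
    ∃ M, 0 < M ∧ bayesPosterior g g' s - bayesPosterior g g' t = (s - t) * M := by
  have hDs := bayesPosterior_denom_pos hg hg' hs
  have hDt := bayesPosterior_denom_pos hg hg' ht
  refine ⟨g * g' / ((g * s + g' * (1 - s)) * (g * t + g' * (1 - t))), by positivity, ?_⟩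
  unfold bayesPosterior
  field_simp
  ring

lemma exists_bayesPosterior_sub_self (hg : 0 < g) (hg' : 0 < g') (hs : s ∈ Icc 0 1) :
    ∃ L, 0 ≤ L ∧ bayesPosterior g g' s - s = (g - g') * L := by
  have hDs := bayesPosterior_denom_pos hg hg' hs
  have hs' : 0 ≤ 1 - s := sub_nonneg.2 hs.2
  have hs₀ := hs.1
  refine ⟨s * (1 - s) / (g * s + g' * (1 - s)), by positivity, ?_⟩
  unfold bayesPosterior
  field_simp
  ring

lemma exists_bayesPosterior_jensen_gap (hg : 0 < g) (hg' : 0 < g')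
    (hs : s ∈ Icc 0 1) (ht : t ∈ Icc 0 1) (hp : p ∈ Icc 0 1) :
    ∃ K, 0 ≤ K ∧ bayesPosterior g g' (s * p + t * (1 - p))
      - (bayesPosterior g g' s * p + bayesPosterior g g' t * (1 - p)) = (g - g') * K := by
  have hp₀ := hp.1
  have hp' : 0 ≤ 1 - p := sub_nonneg.2 hp.2
  have hρ : s * p + t * (1 - p) ∈ Icc 0 1 :=
    ⟨by nlinarith [mul_nonneg hs.1 hp.1, mul_nonneg ht.1 hp'],
      by nlinarith [mul_nonneg (sub_nonneg.2 hs.2) hp.1, mul_nonneg (sub_nonneg.2 ht.2) hp']⟩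
  have hDs := bayesPosterior_denom_pos hg hg' hs
  have hDt := bayesPosterior_denom_pos hg hg' ht
  have hDρ := bayesPosterior_denom_pos hg hg' hρ
  refine ⟨g * g' * p * (1 - p) * (s - t) ^ 2 / ((g * s + g' * (1 - s)) * (g * t + g' * (1 - t))
    * (g * (s * p + t * (1 - p)) + g' * (1 - (s * p + t * (1 - p))))), by positivity, ?_⟩
  unfold bayesPosterior
  field_simp
  ring

end BayesPosterior

lemma sub_mul_sub_nonneg_of_condExp_sub_mul_nonneg {g g' h h' y y' z z' s t : ℝ}
    (hg : 0 < g) (hg' : 0 < g') (hh : 0 < h) (hh' : 0 < h')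
    (hs : s ∈ Icc 0 1) (ht : t ∈ Icc 0 1) (hst : s ≠ t)
    (hsame : 0 ≤ (condExp y y' (bayesPosterior g g' s) - condExp y y' (bayesPosterior g g' t))
      * (condExp z z' (bayesPosterior h h' s) - condExp z z' (bayesPosterior h h' t))) :
    0 ≤ (y - y') * (z - z') := by
  obtain ⟨M, hM, eM⟩ := exists_bayesPosterior_sub_bayesPosterior hg hg' hs ht
  obtain ⟨N, hN, eN⟩ := exists_bayesPosterior_sub_bayesPosterior hh hh' hs ht
  rw [condExp_sub_condExp, condExp_sub_condExp, eM, eN,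
    show (y - y') * ((s - t) * M) * ((z - z') * ((s - t) * N))
      = (y - y') * (z - z') * ((s - t) ^ 2 * M * N) by ring] at hsame
  have hst2 : 0 < (s - t) ^ 2 := sq_pos_of_ne_zero (sub_ne_zero.mpr hst)
  exact nonneg_of_mul_nonneg_left hsame (by positivity)

noncomputable def rdTrue (y y' z z' s : ℝ) : ℝ := (y - z) * s + (y' - z') * (1 - s)

noncomputable def rdCrude (pa pa' y y' z z' s : ℝ) : ℝ :=
  condExp y y' (bayesPosterior pa pa' s) - condExp z z' (bayesPosterior (1 - pa) (1 - pa') s)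

section RiskDifference

variable {pa pa' y y' z z' s t p : ℝ}

lemma rdTrue_mixture : rdTrue y y' z z' (s * p + t * (1 - p))
    = rdTrue y y' z z' s * p + rdTrue y y' z z' t * (1 - p) := by
  unfold rdTrue; ring

lemma exists_rdCrude_sub_rdTrue (hpa : pa ∈ Ioo 0 1) (hpa' : pa' ∈ Ioo 0 1)
    (hs : s ∈ Icc 0 1) :
    ∃ L L', 0 ≤ L ∧ 0 ≤ L' ∧
      rdCrude pa pa' y y' z z' s - rdTrue y y' z z' s
        = (pa - pa') * ((y - y') * L + (z - z') * L') := by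
  obtain ⟨L, hL, eL⟩ := exists_bayesPosterior_sub_self hpa.1 hpa'.1 hs
  obtain ⟨L', hL', eL'⟩ :=
    exists_bayesPosterior_sub_self (sub_pos.2 hpa.2) (sub_pos.2 hpa'.2) hs
  refine ⟨L, L', hL, hL', ?_⟩
  unfold rdCrude rdTrue condExp
  linear_combination (y - y') * eL - (z - z') * eL'

lemma exists_rdCrude_mixture_sub (hpa : pa ∈ Ioo 0 1) (hpa' : pa' ∈ Ioo 0 1)
    (hs : s ∈ Icc 0 1) (ht : t ∈ Icc 0 1) (hp : p ∈ Icc 0 1) :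
    ∃ K K', 0 ≤ K ∧ 0 ≤ K' ∧
      rdCrude pa pa' y y' z z' (s * p + t * (1 - p))
        - (rdCrude pa pa' y y' z z' s * p + rdCrude pa pa' y y' z z' t * (1 - p))
        = (pa - pa') * ((y - y') * K + (z - z') * K') := by
  obtain ⟨K, hK, eK⟩ := exists_bayesPosterior_jensen_gap hpa.1 hpa'.1 hs ht hp
  obtain ⟨K', hK', eK'⟩ :=
    exists_bayesPosterior_jensen_gap (sub_pos.2 hpa.2) (sub_pos.2 hpa'.2) hs ht hp
  refine ⟨K, K', hK, hK', ?_⟩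
  unfold rdCrude condExp
  linear_combination (y - y') * eK - (z - z') * eK'

theorem rdCrude_average_between (hpa : pa ∈ Ioo 0 1) (hpa' : pa' ∈ Ioo 0 1)
    (hs : s ∈ Icc 0 1) (ht : t ∈ Icc 0 1) (hp : p ∈ Icc 0 1) (hst : s ≠ t)
    (hsame : 0 ≤ (condExp y y' (bayesPosterior pa pa' s) - condExp y y' (bayesPosterior pa pa' t))
      * (condExp z z' (bayesPosterior (1 - pa) (1 - pa') s)
        - condExp z z' (bayesPosterior (1 - pa) (1 - pa') t))) :
    min (rdTrue y y' z z' (s * p + t * (1 - p)))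
          (rdCrude pa pa' y y' z z' (s * p + t * (1 - p)))
        ≤ rdCrude pa pa' y y' z z' s * p + rdCrude pa pa' y y' z z' t * (1 - p) ∧
      rdCrude pa pa' y y' z z' s * p + rdCrude pa pa' y y' z z' t * (1 - p)
        ≤ max (rdTrue y y' z z' (s * p + t * (1 - p)))
          (rdCrude pa pa' y y' z z' (s * p + t * (1 - p))) := by
  have hyz := sub_mul_sub_nonneg_of_condExp_sub_mul_nonneg hpa.1 hpa'.1 (sub_pos.2 hpa.2)
    (sub_pos.2 hpa'.2) hs ht hst hsame
  obtain ⟨K, K', hK, hK', eK⟩ := exists_rdCrude_mixture_sub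
    (y := y) (y' := y') (z := z) (z' := z') hpa hpa' hs ht hp
  obtain ⟨Ls, Ls', hLs, hLs', eLs⟩ := exists_rdCrude_sub_rdTrue
    (y := y) (y' := y') (z := z) (z' := z') hpa hpa' hs
  obtain ⟨Lt, Lt', hLt, hLt', eLt⟩ := exists_rdCrude_sub_rdTrue
    (y := y) (y' := y') (z := z) (z' := z') hpa hpa' ht
  have hobs : rdCrude pa pa' y y' z z' s * p + rdCrude pa pa' y y' z z' t * (1 - p)
      - rdTrue y y' z z' (s * p + t * (1 - p))
      = (pa - pa') * ((y - y') * (Ls * p + Lt * (1 - p))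
          + (z - z') * (Ls' * p + Lt' * (1 - p))) := by
    rw [rdTrue_mixture]
    linear_combination p * eLs + (1 - p) * eLt
  apply min_le_and_le_max_of_mul_nonneg
  rw [eK, hobs, mul_mul_mul_comm]
  have hp₀ := hp.1
  have hp₁ : 0 ≤ 1 - p := sub_nonneg.2 hp.2
  exact mul_nonneg (mul_self_nonneg _)
    (mul_add_mul_mul_mul_add_mul_nonneg hyz hK hK' (by positivity) (by positivity))

end RiskDifference

/-- Driver setup: if E[Y|A,D] is monotone in D, then RD_obs lies between
RD_true and RD_crude. -/
theorem stmt7 (pd pcd pcd' pac pac' Yac Yac' Ybc Ybc' : ℝ)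
    (hpd0 : 0 < pd) (hpd1 : pd < 1)
    (hpcd0 : 0 < pcd) (hpcd1 : pcd < 1) (hpcd'0 : 0 < pcd') (hpcd'1 : pcd' < 1)
    (hpac0 : 0 < pac) (hpac1 : pac < 1) (hpac'0 : 0 < pac') (hpac'1 : pac' < 1)
    (hne : pcd ≠ pcd')
    (hmonoD : (condExp Yac Yac' (pcGiven pac pac' (pcd * pd / (pcd * pd + pcd' * (1 - pd))) ((1 - pcd) * pd / (1 - (pcd * pd + pcd' * (1 - pd)))) (pcd * pd + pcd' * (1 - pd))) ≥ condExp Yac Yac' (pcGiven pac pac' (1 - (pcd * pd / (pcd * pd + pcd' * (1 - pd)))) (1 - ((1 - pcd) * pd / (1 - (pcd * pd + pcd' * (1 - pd))))) (pcd * pd + pcd' * (1 - pd))) ∧ condExp Ybc Ybc' (pcGiven (1 - pac) (1 - pac') (pcd * pd / (pcd * pd + pcd' * (1 - pd))) ((1 - pcd) * pd / (1 - (pcd * pd + pcd' * (1 - pd)))) (pcd * pd + pcd' * (1 - pd))) ≥ condExp Ybc Ybc' (pcGiven (1 - pac) (1 - pac') (1 - (pcd * pd / (pcd * pd + pcd'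 * (1 - pd)))) (1 - ((1 - pcd) * pd / (1 - (pcd * pd + pcd' * (1 - pd))))) (pcd * pd + pcd' * (1 - pd)))) ∨ (condExp Yac Yac' (pcGiven pac pac' (pcd * pd / (pcd * pd + pcd' * (1 - pd))) ((1 - pcd) * pd / (1 - (pcd * pd + pcd' * (1 - pd)))) (pcd * pd + pcd' * (1 - pd))) ≤ condExp Yac Yac' (pcGiven pac pac' (1 - (pcd * pd / (pcd * pd + pcd' * (1 - pd)))) (1 - ((1 - pcd) * pd / (1 - (pcd * pd + pcd' * (1 - pd))))) (pcd * pd + pcd' * (1 - pd))) ∧ condExp Ybc Ybc' (pcGiven (1 - pac) (1 - pac') (pcd * pd / (pcd * pd + pcd' * (1 - pd))) ((1 - pcd) * pd / (1 - (pcd * pd + pcd' * (1 - pd)))) (pcd * pd + pcd' * (1 - pd))) ≤ condExp Ybc Ybc' (pcGiven (1 - pac) (1 - pac') (1 - (pcd * pd / (pcd * pd + pcd' * (1 - pd)))) (1 - ((1 - pcd) * pd / (1 - (pcd * pd + pcd' * (1 - pd))))) (pcd * pd + pcd' * (1 - pd))))) :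
    min ((Yac - Ybc) * (pcd * pd + pcd' * (1 - pd)) + (Yac' - Ybc') * (1 - (pcd * pd + pcd' * (1 - pd)))) (condExp Yac Yac' (pcGiven pac pac' 1 1 (pcd * pd + pcd' * (1 - pd))) - condExp Ybc Ybc' (pcGiven (1 - pac) (1 - pac') 1 1 (pcd * pd + pcd' * (1 - pd)))) ≤ ((condExp Yac Yac' (pcGiven pac pac' (pcd * pd / (pcd * pd + pcd' * (1 - pd))) ((1 - pcd) * pd / (1 - (pcd * pd + pcd' * (1 - pd)))) (pcd * pd + pcd' * (1 - pd))) - condExp Ybc Ybc' (pcGiven (1 - pac) (1 - pac') (pcd * pd / (pcd * pd + pcd' * (1 - pd))) ((1 - pcd) * pd / (1 - (pcd * pd + pcd' * (1 - pd)))) (pcd * pd + pcd' * (1 - pd)))) * pd + (condExp Yac Yac' (pcGiven pac pac' (1 - (pcd * pd / (pcd * pd + pcd' * (1 - pd)))) (1 - ((1 - pcd) * pd / (1 - (pcd * pd + pcd' * (1 - pd))))) (pcd * pd + pcd' * (1 - pd))) - condExp Ybc Ybc' (pcGiven (1 - pac) (1 - pac') (1 - (pcd * pd / (pcd * pd + pcd'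 * (1 - pd)))) (1 - ((1 - pcd) * pd / (1 - (pcd * pd + pcd' * (1 - pd))))) (pcd * pd + pcd' * (1 - pd)))) * (1 - pd)) ∧
    ((condExp Yac Yac' (pcGiven pac pac' (pcd * pd / (pcd * pd + pcd' * (1 - pd))) ((1 - pcd) * pd / (1 - (pcd * pd + pcd' * (1 - pd)))) (pcd * pd + pcd' * (1 - pd))) - condExp Ybc Ybc' (pcGiven (1 - pac) (1 - pac') (pcd * pd / (pcd * pd + pcd' * (1 - pd))) ((1 - pcd) * pd / (1 - (pcd * pd + pcd' * (1 - pd)))) (pcd * pd + pcd' * (1 - pd)))) * pd + (condExp Yac Yac' (pcGiven pac pac' (1 - (pcd * pd / (pcd * pd + pcd' * (1 - pd)))) (1 - ((1 - pcd) * pd / (1 - (pcd * pd + pcd' * (1 - pd))))) (pcd * pd + pcd' * (1 - pd))) - condExp Ybc Ybc' (pcGiven (1 - pac) (1 - pac') (1 - (pcd * pd / (pcd * pd + pcd' * (1 - pd)))) (1 - ((1 - pcd) * pd / (1 - (pcd * pd + pcd' * (1 - pd))))) (pcd * pd + pcd' * (1 - pd)))) * (1 - pd)) ≤ max ((Yac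 - Ybc) * (pcd * pd + pcd' * (1 - pd)) + (Yac' - Ybc') * (1 - (pcd * pd + pcd' * (1 - pd)))) (condExp Yac Yac' (pcGiven pac pac' 1 1 (pcd * pd + pcd' * (1 - pd))) - condExp Ybc Ybc' (pcGiven (1 - pac) (1 - pac') 1 1 (pcd * pd + pcd' * (1 - pd))))  := by
  have hρ0 : 0 < pcd * pd + pcd' * (1 - pd) := by nlinarith
  have hρ1 : pcd * pd + pcd' * (1 - pd) < 1 := by nlinarith
  simp only [pcGiven_stratum hpd0.ne' hρ0.ne' (sub_ne_zero.2 hρ1.ne'),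
    pcGiven_stratum_compl hpd1.ne hρ0.ne' (sub_ne_zero.2 hρ1.ne'), pcGiven_one_one] at hmonoD ⊢
  exact rdCrude_average_between ⟨hpac0, hpac1⟩ ⟨hpac'0, hpac'1⟩ ⟨hpcd0.le, hpcd1.le⟩
    ⟨hpcd'0.le, hpcd'1.le⟩ ⟨hpd0.le, hpd1.le⟩ hne
    (mul_nonneg_iff.2 (hmonoD.imp (And.imp sub_nonneg.2 sub_nonneg.2)
      (And.imp sub_nonpos.2 sub_nonpos.2)))
end
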